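/- In a credit-attribution setting with reliabilities p : N → [0,1], let x ∈ N be an author such that every paper containing x has exactly two authors (x and one other author). Then Sh[v̄_{FC}](x) = p_x · Σ_{l ∈ CA(x)} C(x,l) · (2 − p_l)/2, where CA(x) is the set of coauthors of x and C(x,l) = Σ_{k ∈ Pap_x ∩ Pap_l} w_k is the total weight of the papers jointly authored by x and l. -/

import Mathlib

open Finset

attribute [local instance] Classical.propDecidable

noncomputable section

/-- `Π_{T,S}(p) = (∏_{i∈T} p i) * (∏_{i∈S\T} (1 - p i))`. -/
def prodPi {α : Type*} (p : α → ℝ) (T S : Finset α) : ℝ :=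
  (∏ i ∈ T, p i) * (∏ i ∈ S \ T, (1 - p i))

/-- Reliability extension of a TU-game. -/
def relExt {α : Type*} (p : α → ℝ) (v : Finset α → ℝ) (S : Finset α) : ℝ :=
  ∑ T ∈ S.powerset, v T * prodPi p T S

/-- The set of players preceding `x` in the ordering `σ`. -/
def precedingSet {α : Type*} [Fintype α] (σ : Fin (Fintype.card α) ≃ α) (x : α) : Finset α :=
  Finset.univ.filter fun y => σ.symm y < σ.symm x

/-- The Shapley value of player `x` in the TU-game `v`. -/
def shapley {α : Type*} [Fintype α] (v : Finset α → ℝ) (x : α) : ℝ :=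
  (1 / ((Fintype.card α).factorial : ℝ)) *
    ∑ σ : Fin (Fintype.card α) ≃ α,
      (v (insert x (precedingSet σ x)) - v (precedingSet σ x))

/-- `Pap x`: the papers having `x` among their authors. -/
def Pap {α β : Type*} [Fintype β] (Auth : β → Finset α) (x : α) : Finset β :=
  Finset.univ.filter fun k => x ∈ Auth k

/-- The full credit game. -/
def vFC {α β : Type*} [Fintype β] (Auth : β → Finset α) (w : β → ℝ) (S : Finset α) : ℝ :=
  ∑ k ∈ Finset.univ.filter (fun k => (Auth k ∩ S).Nonempty), w k

/-- The full obligation game. -/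
def vFO {α β : Type*} [Fintype β] (Auth : β → Finset α) (w : β → ℝ) (S : Finset α) : ℝ :=
  ∑ k ∈ Finset.univ.filter (fun k => Auth k ⊆ S), w k

/-- The set of coauthors of `x`. -/
def CA {α β : Type*} [Fintype α] [Fintype β] (Auth : β → Finset α) (x : α) : Finset α :=
  Finset.univ.filter fun l => l ≠ x ∧ ∃ k, x ∈ Auth k ∧ l ∈ Auth k

/-- `C(x,l)`: the total weight of papers jointly authored by `x` and `l`. -/
def jointContrib {α β : Type*} [Fintype β] (Auth : β → Finset α) (w : β → ℝ) (x l : α) : ℝ :=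
  ∑ k ∈ Finset.univ.filter (fun k => x ∈ Auth k ∧ l ∈ Auth k), w k

/-!
Under the reliability extension the marginal contribution of `x` to a coalition `S ∌ x` is
`p x` times the expected marginal contribution of `x` to the random sub-coalition of reliable
members of `S`. In the full credit game `x` adds the weight of each of its papers whose other
authors are all absent; for a two-author paper with coauthor `l` that happens with probability
`1 - p l` if `l ∈ S` and `1` otherwise. Swapping `x` and `l` pairs the orderings in which `l`
precedes `x` with those in which it does not, so averaging over orderings gives `(2 - p l) / 2`.
-/

section ReliabilityExtension

variable {α : Type*} (p : α → ℝ)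

lemma prodPi_insert_right {a : α} {T S : Finset α} (haS : a ∉ S) (haT : a ∉ T) :
    prodPi p T (insert a S) = (1 - p a) * prodPi p T S := by
  have : insert a S \ T = insert a (S \ T) := by ext; grind
  rw [prodPi, prodPi, this, prod_insert (by simp [haS])]
  ring

lemma prodPi_insert_insert {a : α} {T S : Finset α} (haS : a ∉ S) (haT : a ∉ T) :
    prodPi p (insert a T) (insert a S) = p a * prodPi p T S := by
  have : insert a S \ insert a T = S \ T := by ext; grind
  rw [prodPi, prodPi, this, prod_insert haT]
  ring

lemma sum_prodPi_powerset (S : Finset α) : ∑ T ∈ S.powerset, prodPi p T S = 1 := by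
  simpa [prodPi] using (prod_add p (fun i => 1 - p i) S).symm

lemma sum_prodPi_powerset_filter_notMem (S : Finset α) (l : α) :
    ∑ T ∈ S.powerset with l ∉ T, prodPi p T S = if l ∈ S then 1 - p l else 1 := by
  split_ifs with hl
  · obtain ⟨S', hlS', rfl⟩ : ∃ S', l ∉ S' ∧ S = insert l S' :=
      ⟨S.erase l, notMem_erase l S, (insert_erase hl).symm⟩
    have hsub : ∀ T ∈ S'.powerset, l ∉ T := fun T hT hlT => hlS' (mem_powerset.1 hT hlT)
    rw [sum_filter, sum_powerset_insert hlS']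
    simp only [mem_insert_self, not_true_eq_false, if_false, sum_const_zero, add_zero]
    rw [sum_congr rfl fun T hT => by
        rw [if_pos (hsub T hT), prodPi_insert_right p hlS' (hsub T hT)],
      ← mul_sum, sum_prodPi_powerset, mul_one]
  · have hsub : ∀ T ∈ S.powerset, l ∉ T := fun T hT hlT => hl (mem_powerset.1 hT hlT)
    rw [sum_filter, sum_congr rfl fun T hT => if_pos (hsub T hT), sum_prodPi_powerset]

lemma relExt_insert_sub (v : Finset α → ℝ) {x : α} {S : Finset α} (hxS : x ∉ S) :
    relExt p v (insert x S) - relExt p v S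
      = p x * ∑ T ∈ S.powerset, (v (insert x T) - v T) * prodPi p T S := by
  have hxT : ∀ T ∈ S.powerset, x ∉ T := fun T hT hxT => hxS (mem_powerset.1 hT hxT)
  rw [relExt, relExt, sum_powerset_insert hxS, mul_sum, add_sub_right_comm, ← sum_sub_distrib,
    ← sum_add_distrib]
  refine sum_congr rfl fun T hT => ?_
  rw [prodPi_insert_right p hxS (hxT T hT), prodPi_insert_insert p hxS (hxT T hT)]
  ring

end ReliabilityExtension

section FullCredit

variable {α β : Type*} [Fintype β] (Auth : β → Finset α) (w : β → ℝ)

lemma vFC_insert_sub (x : α) (T : Finset α) :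
    vFC Auth w (insert x T) - vFC Auth w T
      = ∑ k ∈ Pap Auth x, if Disjoint (Auth k) T then w k else 0 := by
  rw [vFC, vFC, Pap, sum_filter, sum_filter, sum_filter, ← sum_sub_distrib]
  refine sum_congr rfl fun k _ => ?_
  simp only [← not_disjoint_iff_nonempty_inter, disjoint_insert_right]
  by_cases hx : x ∈ Auth k <;> by_cases hT : Disjoint (Auth k) T <;> simp [hx, hT]

lemma sum_CA_jointContrib_mul [Fintype α] (x : α) (f : α → ℝ) :
    ∑ l ∈ CA Auth x, jointContrib Auth w x l * f l
      = ∑ k ∈ Pap Auth x, w k * ∑ l ∈ (Auth k).erase x, f l := by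
  simp only [jointContrib, sum_mul, mul_sum]
  refine sum_comm' fun l k => ?_
  simp only [CA, Pap, mem_filter, mem_univ, true_and, mem_erase]
  exact ⟨fun ⟨⟨hlx, _⟩, hxk, hlk⟩ => ⟨⟨hlx, hlk⟩, hxk⟩,
    fun ⟨⟨hlx, hlk⟩, hxk⟩ => ⟨⟨hlx, k, hxk, hlk⟩, hxk, hlk⟩⟩

variable [Fintype α] {x : α} (h2 : ∀ k, x ∈ Auth k → (Auth k).card = 2)
include h2

lemma vFC_insert_sub_of_card_eq_two {T : Finset α} (hxT : x ∉ T) :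
    vFC Auth w (insert x T) - vFC Auth w T
      = ∑ l ∈ CA Auth x with l ∉ T, jointContrib Auth w x l := by
  rw [sum_filter, ← sum_congr rfl fun l _ => mul_boole (l ∉ T) (jointContrib Auth w x l),
    sum_CA_jointContrib_mul, vFC_insert_sub]
  refine sum_congr rfl fun k hk => ?_
  have hxk : x ∈ Auth k := (mem_filter.1 hk).2
  obtain ⟨l, hl⟩ : ∃ l, (Auth k).erase x = {l} := card_eq_one.1 (by
    rw [card_erase_of_mem hxk, h2 k hxk])
  have hAuth : Auth k = {x, l} := by rw [← insert_erase hxk, hl]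
  rw [hl, sum_singleton, hAuth]
  by_cases hlT : l ∈ T <;> simp [hlT, hxT]

lemma relExt_vFC_insert_sub (p : α → ℝ) {S : Finset α} (hxS : x ∉ S) :
    relExt p (vFC Auth w) (insert x S) - relExt p (vFC Auth w) S
      = p x * ∑ l ∈ CA Auth x, jointContrib Auth w x l * (if l ∈ S then 1 - p l else 1) := by
  have hxT : ∀ T ∈ S.powerset, x ∉ T := fun T hT hxT => hxS (mem_powerset.1 hT hxT)
  rw [relExt_insert_sub p _ hxS]
  congr 1
  simp only [← sum_prodPi_powerset_filter_notMem, mul_sum]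
  rw [sum_congr rfl fun T hT => by rw [vFC_insert_sub_of_card_eq_two Auth w h2 (hxT T hT), sum_mul]]
  exact sum_comm' fun T l => by simp only [mem_filter]; tauto

end FullCredit

section Shapley

variable {α : Type*} [Fintype α]

lemma mem_precedingSet_trans_swap {x l : α} (hlx : l ≠ x) (σ : Fin (Fintype.card α) ≃ α) :
    l ∈ precedingSet (σ.trans (Equiv.swap x l)) x ↔ l ∉ precedingSet σ x := by
  have hne : σ.symm l ≠ σ.symm x := σ.symm.injective.ne hlx
  simp only [precedingSet, mem_filter, mem_univ, true_and, Equiv.symm_trans_apply,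
    Equiv.symm_swap, Equiv.swap_apply_left, Equiv.swap_apply_right, not_lt]
  exact ⟨le_of_lt, fun h => lt_of_le_of_ne h hne.symm⟩

lemma sum_ite_mem_precedingSet {x l : α} (hlx : l ≠ x) (a b : ℝ) :
    ∑ σ : Fin (Fintype.card α) ≃ α, (if l ∈ precedingSet σ x then a else b)
      = (Fintype.card α).factorial * (a + b) / 2 := by
  set f : (Fin (Fintype.card α) ≃ α) → ℝ :=
    fun σ => if l ∈ precedingSet σ x then a else b
  have hpair (σ : Fin (Fintype.card α) ≃ α) :
      f σ + f (σ.trans (Equiv.swap x l)) = a + b := by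
    by_cases h : l ∈ precedingSet σ x <;>
      simp [f, h, mem_precedingSet_trans_swap hlx, add_comm]
  have hswap :
      ∑ σ : Fin (Fintype.card α) ≃ α, f (σ.trans (Equiv.swap x l)) = ∑ σ, f σ :=
    Equiv.sum_comp ((Equiv.refl _).equivCongr (Equiv.swap x l)) f
  have hcard : Fintype.card (Fin (Fintype.card α) ≃ α) = (Fintype.card α).factorial := by
    rw [Fintype.card_equiv (Fintype.equivFin α).symm, Fintype.card_fin]
  have : 2 * ∑ σ, f σ = (Fintype.card α).factorial * (a + b) := by
    calc 2 * ∑ σ, f σ = ∑ σ, (f σ + f (σ.trans (Equiv.swap x l))) := by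
          rw [sum_add_distrib, hswap]; ring
      _ = (Fintype.card α).factorial * (a + b) := by
          rw [sum_congr rfl fun σ _ => hpair σ, sum_const, card_univ, hcard, nsmul_eq_mul]
  linarith

end Shapley

theorem stmt_13_general {α β : Type*} [Fintype α] [Fintype β]
    (Auth : β → Finset α)
    (w : β → ℝ)
    (p : α → ℝ)
    (x : α) (h2 : ∀ k, x ∈ Auth k → (Auth k).card = 2) :
    shapley (relExt p (vFC Auth w)) x =
      p x * ∑ l ∈ CA Auth x, jointContrib Auth w x l * (2 - p l) / 2 := by
  have hx : ∀ σ : Fin (Fintype.card α) ≃ α, x ∉ precedingSet σ x := by simp [precedingSet]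
  have hl : ∀ l ∈ CA Auth x, l ≠ x := fun l hl => (mem_filter.1 hl).2.1
  have hfac : ((Fintype.card α).factorial : ℝ) ≠ 0 := by positivity
  have hmarg : ∀ σ : Fin (Fintype.card α) ≃ α,
      relExt p (vFC Auth w) (insert x (precedingSet σ x))
          - relExt p (vFC Auth w) (precedingSet σ x)
        = p x * ∑ l ∈ CA Auth x,
          jointContrib Auth w x l * (if l ∈ precedingSet σ x then 1 - p l else 1) :=
    fun σ => relExt_vFC_insert_sub Auth w h2 p (hx σ)
  have hperm : ∀ l ∈ CA Auth x, ∑ σ : Fin (Fintype.card α) ≃ α,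
      jointContrib Auth w x l * (if l ∈ precedingSet σ x then 1 - p l else 1)
        = jointContrib Auth w x l * ((Fintype.card α).factorial * (1 - p l + 1) / 2) :=
    fun l hlC => by rw [← mul_sum, sum_ite_mem_precedingSet (hl l hlC)]
  rw [shapley, Fintype.sum_congr _ _ hmarg, ← mul_sum, sum_comm, sum_congr rfl hperm,
    mul_left_comm, mul_sum]
  congr 1
  refine sum_congr rfl fun l _ => ?_
  field_simp
  ring

theorem stmt_13 {α β : Type*} [Fintype α] [Fintype β] [DecidableEq α]
    (Auth : β → Finset α) (hAuth : ∀ k, (Auth k).Nonempty)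
    (w : β → ℝ) (hw : ∀ k, 0 ≤ w k)
    (p : α → ℝ) (hp : ∀ i, p i ∈ Set.Icc (0 : ℝ) 1)
    (x : α) (h2 : ∀ k, x ∈ Auth k → (Auth k).card = 2) :
    shapley (relExt p (vFC Auth w)) x =
      p x * ∑ l ∈ CA Auth x, jointContrib Auth w x l * (2 - p l) / 2 :=
  stmt_13_general Auth w p x h2

end
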